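/- Let d ≥ 1 and m ≥ 2 be integers, g ≥ 0, L ≥ 0 real numbers, and r ≥ d+2. Consider the MBSP instance given by the zipper DAG Z(d,m) with P = 2 processors and cache capacity r. In every valid schedule in which every COMPUTE transition of a child of H_1 occurs on processor 1 and every COMPUTE transition of a child of H_2 occurs on processor 2, each of the 2(m−1) nodes in {v_i, u_i : i ∈ [m−1]} is the subject of at least one SAVE transition and at least one LOAD transition; consequently, the synchronous cost of every such schedule is at least 2(m−1)·g. -/

import Mathlib

namespace MBSP

/-- A transition (pebbling move) of a single processor. -/
inductive Op (ν : Type) where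
  | load : ν → Op ν
  | save : ν → Op ν
  | compute : ν → Op ν
  | delete : ν → Op ν
deriving DecidableEq

/-- An MBSP instance: a DAG with compute weights `ω`, memory weights `μ`,
`P` processors, cache capacity `r`, communication cost `g` and synchronization cost `L`. -/
structure Inst (ν : Type) where
  edge : ν → ν → Prop
  ω : ν → ℝ
  μ : ν → ℝ
  P : ℕ
  r : ℝ
  g : ℝ
  L : ℝ

variable {ν : Type} [DecidableEq ν]

def isSource (I : Inst ν) (v : ν) : Prop := ¬ ∃ u, I.edge u v

def isSink (I : Inst ν) (v : ν) : Prop := ¬ ∃ u, I.edge v u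

def Acyclic (I : Inst ν) : Prop := ∀ v, ¬ Relation.TransGen I.edge v v

def opCost (I : Inst ν) : Op ν → ℝ
  | .load v => I.μ v * I.g
  | .save v => I.μ v * I.g
  | .compute v => I.ω v
  | .delete _ => 0

def applyOp (R B : Finset ν) : Op ν → Finset ν × Finset ν
  | .load v => (insert v R, B)
  | .save v => (R, insert v B)
  | .compute v => (insert v R, B)
  | .delete v => (R.erase v, B)

def opOK (I : Inst ν) (R B : Finset ν) : Op ν → Prop
  | .load v => v ∈ B
  | .save v => v ∈ R
  | .compute v => (∃ u, I.edge u v) ∧ ∀ u, I.edge u v → u ∈ R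
  | .delete _ => True

/-- The memory bound for a cache content `R`. -/
def memOK (I : Inst ν) (R : Finset ν) : Prop := ∑ v ∈ R, I.μ v ≤ I.r

/-- Run a sequence of transitions of one processor on a pair (cache, slow memory). -/
def run (R B : Finset ν) : List (Op ν) → Finset ν × Finset ν
  | [] => (R, B)
  | op :: rest => run (applyOp R B op).1 (applyOp R B op).2 rest

/-- Validity of a sequence of transitions of one processor: every precondition holds
when the transition is applied and the memory bound holds throughout. -/
def seqValid (I : Inst ν) (R B : Finset ν) : List (Op ν) → Prop
  | [] => True
  | op :: rest => opOK I R B op ∧ memOK I (applyOp R B op).1 ∧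
      seqValid I (applyOp R B op).1 (applyOp R B op).2 rest

/-- A superstep: for every processor, a compute phase (computes and deletes),
then a save phase, a delete phase and a load phase. -/
structure Superstep (ν : Type) (P : ℕ) where
  comp : Fin P → List (Op ν)
  save : Fin P → List ν
  del : Fin P → List ν
  load : Fin P → List ν

structure Config (ν : Type) (P : ℕ) where
  R : Fin P → Finset ν
  B : Finset ν

abbrev Schedule (ν : Type) (P : ℕ) := List (Superstep ν P)

variable {P : ℕ}

def compOnly (l : List (Op ν)) : Prop :=
  ∀ op ∈ l, (∃ v, op = Op.compute v) ∨ (∃ v, op = Op.delete v)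

def afterComp (c : Config ν P) (S : Superstep ν P) (p : Fin P) : Finset ν :=
  (run (c.R p) c.B (S.comp p)).1

/-- The shared slow memory after the save phases of all processors. -/
def newB (c : Config ν P) (S : Superstep ν P) : Finset ν :=
  c.B ∪ Finset.univ.biUnion (fun p => (S.save p).toFinset)

def afterDel (c : Config ν P) (S : Superstep ν P) (p : Fin P) : Finset ν :=
  (S.del p).foldl Finset.erase (afterComp c S p)

def afterLoad (c : Config ν P) (S : Superstep ν P) (p : Fin P) : Finset ν :=
  afterDel c S p ∪ (S.load p).toFinset

/-- The configuration reached after executing a superstep. -/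
def stepConfig (c : Config ν P) (S : Superstep ν P) : Config ν P :=
  ⟨fun p => afterLoad c S p, newB c S⟩

/-- Validity of a superstep at a configuration. -/
def ssValid (I : Inst ν) (c : Config ν I.P) (S : Superstep ν I.P) : Prop :=
  (∀ p, compOnly (S.comp p)) ∧
  (∀ p, seqValid I (c.R p) c.B (S.comp p)) ∧
  (∀ p, ∀ v ∈ S.save p, v ∈ afterComp c S p) ∧
  (∀ p, ∀ v ∈ S.load p, v ∈ newB c S) ∧
  (∀ p, memOK I (afterLoad c S p))

def runSched (c : Config ν P) : Schedule ν P → Config ν P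
  | [] => c
  | S :: rest => runSched (stepConfig c S) rest

def schedValidFrom (I : Inst ν) (c : Config ν I.P) : Schedule ν I.P → Prop
  | [] => True
  | S :: rest => ssValid I c S ∧ schedValidFrom I (stepConfig c S) rest

/-- `B` is exactly the set of sources of the DAG. -/
def initB (I : Inst ν) (B : Finset ν) : Prop := ∀ v, v ∈ B ↔ isSource I v

/-- A valid MBSP schedule: starts with empty caches and the sources in slow memory,
every transition is legal and the memory bound holds throughout, and at the end
every sink is in slow memory. -/
def Valid (I : Inst ν) (sched : Schedule ν I.P) : Prop :=
  ∃ B0 : Finset ν, initB I B0 ∧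
    schedValidFrom I ⟨fun _ => ∅, B0⟩ sched ∧
    ∀ v, isSink I v → v ∈ (runSched (⟨fun _ => ∅, B0⟩ : Config ν I.P) sched).B

def listCost (I : Inst ν) (l : List (Op ν)) : ℝ := (l.map (opCost I)).sum

def ioCost (I : Inst ν) (l : List ν) : ℝ := (l.map (fun v => I.μ v * I.g)).sum

/-- The synchronous cost of a superstep. -/
noncomputable def ssCost (I : Inst ν) (S : Superstep ν I.P) : ℝ :=
  (⨆ p : Fin I.P, listCost I (S.comp p)) + (⨆ p : Fin I.P, ioCost I (S.save p)) +
    (⨆ p : Fin I.P, ioCost I (S.load p)) + I.L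

/-- The synchronous cost of a schedule. -/
noncomputable def syncCost (I : Inst ν) (sched : Schedule ν I.P) : ℝ :=
  (sched.map (ssCost I)).sum

/-- Finishing times of the saves in a save phase starting at time `t`. -/
def saveFinishes (I : Inst ν) : ℝ → List ν → List (ν × ℝ)
  | _, [] => []
  | t, v :: rest => (v, t + I.μ v * I.g) :: saveFinishes I (t + I.μ v * I.g) rest

def minSaveTime (entries : List (ν × ℝ)) (v : ν) : Option ℝ :=
  ((entries.filter (fun e => e.1 == v)).map Prod.snd).min?

/-- Finishing time of a load phase: each load waits for the value to be available
in slow memory (time `Γ v`). -/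
def loadFold (I : Inst ν) (Γ : ν → Option ℝ) : ℝ → List ν → ℝ
  | t, [] => t
  | t, v :: rest => loadFold I Γ (max t ((Γ v).getD 0) + I.μ v * I.g) rest

/-- One superstep of the asynchronous execution: updates the finishing time of
every processor and the availability times `Γ` of the values in slow memory. -/
def asyncSS (I : Inst ν) (S : Superstep ν I.P)
    (st : (Fin I.P → ℝ) × (ν → Option ℝ)) : (Fin I.P → ℝ) × (ν → Option ℝ) :=
  let t1 : Fin I.P → ℝ := fun p => st.1 p + listCost I (S.comp p)
  let entries : List (ν × ℝ) :=
    ((List.finRange I.P).map (fun p => saveFinishes I (t1 p) (S.save p))).flatten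
  let Γ' : ν → Option ℝ := fun v => (st.2 v).orElse (fun _ => minSaveTime entries v)
  let t2 : Fin I.P → ℝ := fun p => t1 p + ioCost I (S.save p)
  (fun p => loadFold I Γ' (t2 p) (S.load p), Γ')

def asyncRun (I : Inst ν) (st : (Fin I.P → ℝ) × (ν → Option ℝ)) :
    Schedule ν I.P → (Fin I.P → ℝ) × (ν → Option ℝ)
  | [] => st
  | S :: rest => asyncRun I (asyncSS I S st) rest

/-- The asynchronous cost (makespan) of a schedule. -/
noncomputable def asyncCost (I : Inst ν) (sched : Schedule ν I.P) : ℝ :=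
  ⨆ p : Fin I.P, (asyncRun I (fun _ => (0 : ℝ), fun _ => none) sched).1 p

end MBSP

namespace MBSP

/-- Nodes of the zipper DAG `Z(d,m)`: two groups `H₁`, `H₂` of `d` source nodes
each, and two chains `v_1,…,v_m` and `u_1,…,u_m` (index `i ∈ [m]` is `Fin`-value `i-1`). -/
inductive ZNode (d m : ℕ) where
  | h1 : Fin d → ZNode d m
  | h2 : Fin d → ZNode d m
  | v : Fin m → ZNode d m
  | u : Fin m → ZNode d m
deriving DecidableEq, Fintype

/-- Edges of the zipper DAG `Z(d,m)`. -/
def zEdge (d m : ℕ) : ZNode d m → ZNode d m → Prop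
  | .v i, .v j => (j : ℕ) = (i : ℕ) + 1
  | .u i, .u j => (j : ℕ) = (i : ℕ) + 1
  | .h1 _, .u i => Odd ((i : ℕ) + 1)
  | .h1 _, .v i => Even ((i : ℕ) + 1)
  | .h2 _, .v i => Odd ((i : ℕ) + 1)
  | .h2 _, .u i => Even ((i : ℕ) + 1)
  | _, _ => False

/-- The MBSP instance on the zipper DAG `Z(d,m)` with `P = 2` processors, cache
capacity `r`, communication cost `g` and synchronization cost `L`; all compute and
memory weights are `1`. -/
def zipper (d m : ℕ) (r g L : ℝ) : Inst (ZNode d m) where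
  edge := zEdge d m
  ω := fun _ => 1
  μ := fun _ => 1
  P := 2
  r := r
  g := g
  L := L

end MBSP

/-!
The last node of each chain `v`, `u` is a sink and not a source, so it is computed. Walking back
along a chain, a node computed on processor `p` needs its predecessor in `p`'s cache, so the
predecessor is computed or loaded on `p`; a loaded node that is not a source was computed
somewhere too, so every chain node is computed. Consecutive chain nodes hang off opposite groups
`H₁`, `H₂` and are therefore computed on different processors, so each predecessor reaches the
processor of its successor only by a LOAD, which needs a SAVE since it is not a source. For the
cost, a save or load phase costs at least the average over the two processors.
-/

namespace MBSP

section Provenance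

variable {ν : Type}

def Config.Holds {P : ℕ} (c : Config ν P) (y : ν) : Prop := y ∈ c.B ∨ ∃ p, y ∈ c.R p

def ComputedOn {P : ℕ} (sched : Schedule ν P) (p : Fin P) (y : ν) : Prop :=
  ∃ S ∈ sched, Op.compute y ∈ S.comp p

lemma computedOn_cons {P : ℕ} {S : Superstep ν P} {sched : Schedule ν P} {p : Fin P} {y : ν}
    (h : ComputedOn sched p y) : ComputedOn (S :: sched) p y :=
  let ⟨T, hT, hy⟩ := h
  ⟨T, List.mem_cons_of_mem S hT, hy⟩

lemma compOnly.load_notMem {l : List (Op ν)} (hl : compOnly l) (y : ν) : Op.load y ∉ l := by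
  intro hy
  rcases hl _ hy with ⟨_, h⟩ | ⟨_, h⟩ <;> cases h

variable [DecidableEq ν] {I : Inst ν}

lemma mem_applyOp_fst {R B : Finset ν} {op : Op ν} {y : ν} (hy : y ∈ (applyOp R B op).1) :
    y ∈ R ∨ op = .compute y ∨ op = .load y := by
  cases op with
  | load v => rcases Finset.mem_insert.1 hy with rfl | h <;> simp_all
  | save v => exact Or.inl hy
  | compute v => rcases Finset.mem_insert.1 hy with rfl | h <;> simp_all
  | delete v => exact Or.inl (Finset.mem_of_mem_erase hy)

lemma mem_cons_of_mem_applyOp_fst {R B : Finset ν} {op : Op ν} {l : List (Op ν)} {y : ν}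
    (hy : y ∈ (applyOp R B op).1 ∨ .compute y ∈ l ∨ .load y ∈ l) :
    y ∈ R ∨ .compute y ∈ op :: l ∨ .load y ∈ op :: l := by
  rcases hy with hy | hy | hy
  · rcases mem_applyOp_fst hy with hy | rfl | rfl <;> simp [hy]
  all_goals simp [hy]

lemma mem_run_fst : ∀ {l : List (Op ν)} {R B : Finset ν} {y : ν}, y ∈ (run R B l).1 →
    y ∈ R ∨ .compute y ∈ l ∨ .load y ∈ l
  | [], _, _, _, hy => Or.inl hy
  | _ :: _, _, _, _, hy => mem_cons_of_mem_applyOp_fst (mem_run_fst hy)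

lemma seqValid.mem_of_compute_child {x y : ν} (hxy : I.edge x y) :
    ∀ {l : List (Op ν)} {R B : Finset ν}, seqValid I R B l → .compute y ∈ l →
      x ∈ R ∨ .compute x ∈ l ∨ .load x ∈ l
  | op :: _, _, _, ⟨hok, _, hrest⟩, hy => by
    rcases List.mem_cons.1 hy with rfl | hy
    · exact Or.inl (hok.2 x hxy)
    · exact mem_cons_of_mem_applyOp_fst (seqValid.mem_of_compute_child hxy hrest hy)

lemma foldl_erase_subset (l : List ν) (s : Finset ν) : l.foldl Finset.erase s ⊆ s := by
  induction l generalizing s with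
  | nil => exact subset_rfl
  | cons v l ih => exact (ih (s.erase v)).trans (Finset.erase_subset v s)

lemma mem_newB {P : ℕ} {c : Config ν P} {S : Superstep ν P} {y : ν} :
    y ∈ newB c S ↔ y ∈ c.B ∨ ∃ p, y ∈ S.save p := by
  simp [newB]

section Superstep

variable {c : Config ν I.P} {S : Superstep ν I.P} {p : Fin I.P} {y : ν}

lemma ssValid.mem_afterComp (hss : ssValid I c S) (hy : y ∈ afterComp c S p) :
    y ∈ c.R p ∨ .compute y ∈ S.comp p :=
  (mem_run_fst hy).imp_right fun h => h.resolve_right ((hss.1 p).load_notMem y)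

lemma ssValid.mem_of_compute_child (hss : ssValid I c S) {x : ν} (hxy : I.edge x y)
    (hy : .compute y ∈ S.comp p) : x ∈ c.R p ∨ .compute x ∈ S.comp p :=
  (seqValid.mem_of_compute_child hxy (hss.2.1 p) hy).imp_right
    fun h => h.resolve_right ((hss.1 p).load_notMem x)

lemma ssValid.mem_stepConfig_R (hss : ssValid I c S) (hy : y ∈ (stepConfig c S).R p) :
    y ∈ c.R p ∨ .compute y ∈ S.comp p ∨ y ∈ S.load p := by
  rcases Finset.mem_union.1 hy with hy | hy
  · exact (hss.mem_afterComp (foldl_erase_subset _ _ hy)).imp_right Or.inl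
  · exact Or.inr (Or.inr (List.mem_toFinset.1 hy))

lemma ssValid.holds_or_computed (hss : ssValid I c S)
    (hy : (stepConfig c S).Holds y ∨ ∃ p, y ∈ S.save p ∨ y ∈ S.load p) :
    c.Holds y ∨ ∃ p, .compute y ∈ S.comp p := by
  have of_save : ∀ p, y ∈ S.save p → c.Holds y ∨ ∃ p, .compute y ∈ S.comp p := fun p h =>
    (hss.mem_afterComp (hss.2.2.1 p y h)).imp (fun h => Or.inr ⟨p, h⟩) (⟨p, ·⟩)
  have of_newB : y ∈ newB c S → c.Holds y ∨ ∃ p, .compute y ∈ S.comp p := fun h => by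
    rcases mem_newB.1 h with h | ⟨p, h⟩
    exacts [Or.inl (Or.inl h), of_save p h]
  rcases hy with (h | ⟨p, h⟩) | ⟨p, h | h⟩
  · exact of_newB h
  · rcases hss.mem_stepConfig_R h with h | h | h
    exacts [Or.inl (Or.inr ⟨p, h⟩), Or.inr ⟨p, h⟩, of_newB (hss.2.2.2.1 p y h)]
  · exact of_save p h
  · exact of_newB (hss.2.2.2.1 p y h)

end Superstep

theorem schedValidFrom.holds_or_computed {y : ν} :
    ∀ {c : Config ν I.P} {sched : Schedule ν I.P}, schedValidFrom I c sched →
      (runSched c sched).Holds y ∨ (∃ S ∈ sched, ∃ p, y ∈ S.save p ∨ y ∈ S.load p) →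
      c.Holds y ∨ ∃ p, ComputedOn sched p y
  | _, [], _, hy => hy.imp_right fun ⟨_, hS, _⟩ => absurd hS List.not_mem_nil
  | c, S :: sched, ⟨hss, hrest⟩, hy => by
    have of_step : (stepConfig c S).Holds y ∨ (∃ p, y ∈ S.save p ∨ y ∈ S.load p) →
        c.Holds y ∨ ∃ p, ComputedOn (S :: sched) p y := fun h =>
      (hss.holds_or_computed h).imp_right fun ⟨p, hp⟩ => ⟨p, S, List.mem_cons_self, hp⟩
    have of_rest : (runSched (stepConfig c S) sched).Holds y ∨
        (∃ T ∈ sched, ∃ p, y ∈ T.save p ∨ y ∈ T.load p) →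
        c.Holds y ∨ ∃ p, ComputedOn (S :: sched) p y := fun h => by
      rcases hrest.holds_or_computed h with h | ⟨p, hp⟩
      exacts [of_step (Or.inl h), Or.inr ⟨p, computedOn_cons hp⟩]
    rcases hy with h | ⟨T, hT, p, hp⟩
    · exact of_rest (Or.inl h)
    rcases List.mem_cons.1 hT with rfl | hT
    exacts [of_step (Or.inr ⟨p, hp⟩), of_rest (Or.inr ⟨T, hT, p, hp⟩)]

theorem schedValidFrom.mem_B_or_saved_of_loaded {y : ν} :
    ∀ {c : Config ν I.P} {sched : Schedule ν I.P}, schedValidFrom I c sched →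
      (∃ S ∈ sched, ∃ p, y ∈ S.load p) → y ∈ c.B ∨ ∃ S ∈ sched, ∃ p, y ∈ S.save p
  | _, [], _, ⟨_, hS, _⟩ => absurd hS List.not_mem_nil
  | c, S :: sched, ⟨hss, hrest⟩, ⟨T, hT, p, hp⟩ => by
    have of_newB : y ∈ newB c S → y ∈ c.B ∨ ∃ T ∈ S :: sched, ∃ p, y ∈ T.save p := fun h =>
      (mem_newB.1 h).imp_right fun ⟨q, hq⟩ => ⟨S, List.mem_cons_self, q, hq⟩
    rcases List.mem_cons.1 hT with rfl | hT
    · exact of_newB (hss.2.2.2.1 p y hp)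
    rcases hrest.mem_B_or_saved_of_loaded ⟨T, hT, p, hp⟩ with h | ⟨T', hT', q, hq⟩
    exacts [of_newB h, Or.inr ⟨T', List.mem_cons_of_mem S hT', q, hq⟩]

theorem schedValidFrom.mem_or_computedOn_or_loaded_of_child {x y : ν} (hxy : I.edge x y)
    {p : Fin I.P} :
    ∀ {c : Config ν I.P} {sched : Schedule ν I.P}, schedValidFrom I c sched →
      ComputedOn sched p y → x ∈ c.R p ∨ ComputedOn sched p x ∨ ∃ S ∈ sched, x ∈ S.load p
  | _, [], _, ⟨_, hS, _⟩ => absurd hS List.not_mem_nil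
  | c, S :: sched, ⟨hss, hrest⟩, ⟨T, hT, hy⟩ => by
    rcases List.mem_cons.1 hT with rfl | hT
    · exact (hss.mem_of_compute_child hxy hy).imp_right
        fun h => Or.inl ⟨T, List.mem_cons_self, h⟩
    rcases mem_or_computedOn_or_loaded_of_child hxy hrest ⟨T, hT, hy⟩ with h | h | ⟨T', hT', h⟩
    · rcases hss.mem_stepConfig_R h with h | h | h
      exacts [Or.inl h, Or.inr (Or.inl ⟨S, List.mem_cons_self, h⟩),
        Or.inr (Or.inr ⟨S, List.mem_cons_self, h⟩)]
    · exact Or.inr (Or.inl (computedOn_cons h))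
    · exact Or.inr (Or.inr ⟨T', List.mem_cons_of_mem S hT', h⟩)

section Chain

variable {sched : Schedule ν I.P} {B₀ : Finset ν}
  (hsched : schedValidFrom I ⟨fun _ => ∅, B₀⟩ sched)
include hsched

theorem computed_of_holds_or_transferred {y : ν} (hy : y ∉ B₀)
    (h : (runSched ⟨fun _ => ∅, B₀⟩ sched).Holds y ∨
      ∃ S ∈ sched, ∃ p, y ∈ S.save p ∨ y ∈ S.load p) :
    ∃ p, ComputedOn sched p y := by
  rcases hsched.holds_or_computed h with (h | ⟨_, h⟩) | h
  exacts [absurd h hy, absurd h (Finset.notMem_empty y), h]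

theorem computedOn_or_loaded_of_child {x y : ν} (hxy : I.edge x y) {p : Fin I.P}
    (hy : ComputedOn sched p y) : ComputedOn sched p x ∨ ∃ S ∈ sched, x ∈ S.load p :=
  (hsched.mem_or_computedOn_or_loaded_of_child hxy hy).resolve_left (Finset.notMem_empty x)

theorem computed_of_child {x y : ν} (hxy : I.edge x y) (hx : x ∉ B₀) {p : Fin I.P}
    (hy : ComputedOn sched p y) : ∃ p, ComputedOn sched p x := by
  rcases computedOn_or_loaded_of_child hsched hxy hy with h | ⟨S, hS, h⟩
  exacts [⟨p, h⟩, computed_of_holds_or_transferred hsched hx (Or.inr ⟨S, hS, p, Or.inr h⟩)]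

theorem saved_and_loaded_of_path {n : ℕ} (w : Fin (n + 1) → ν)
    (hedge : ∀ i : Fin n, I.edge (w i.castSucc) (w i.succ)) (hB₀ : ∀ i, w i ∉ B₀)
    (hlast : w (Fin.last n) ∈ (runSched ⟨fun _ => ∅, B₀⟩ sched).B)
    (hsep : ∀ (i : Fin n) (p : Fin I.P),
      ComputedOn sched p (w i.castSucc) → ¬ ComputedOn sched p (w i.succ))
    (i : Fin n) :
    (∃ S ∈ sched, ∃ p, w i.castSucc ∈ S.save p) ∧
      (∃ S ∈ sched, ∃ p, w i.castSucc ∈ S.load p) := by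
  have hcomputed : ∀ j, ∃ p, ComputedOn sched p (w j) :=
    Fin.reverseInduction (computed_of_holds_or_transferred hsched (hB₀ _) (Or.inl (Or.inl hlast)))
      (fun j ⟨_, h⟩ => computed_of_child hsched (hedge j) (hB₀ _) h)
  obtain ⟨p, hp⟩ := hcomputed i.succ
  obtain ⟨S, hS, hload⟩ := (computedOn_or_loaded_of_child hsched (hedge i) hp).resolve_left
    fun h => hsep i p h hp
  have hloaded : ∃ S ∈ sched, ∃ p, w i.castSucc ∈ S.load p := ⟨S, hS, p, hload⟩
  exact ⟨(hsched.mem_B_or_saved_of_loaded hloaded).resolve_left (hB₀ _), hloaded⟩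

end Chain

end Provenance

section Cost

variable {ν : Type} {P : ℕ}

def transfers (phase : Superstep ν P → Fin P → List ν) (sched : Schedule ν P) : List ν :=
  sched.flatMap fun S => (List.finRange P).flatMap (phase S)

lemma mem_transfers {phase : Superstep ν P → Fin P → List ν} {sched : Schedule ν P} {y : ν} :
    y ∈ transfers phase sched ↔ ∃ S ∈ sched, ∃ p, y ∈ phase S p := by
  simp [transfers]

lemma sum_le_mul_iSup (f : Fin P → ℝ) : ∑ p, f p ≤ P * ⨆ p, f p := by
  simpa using Finset.sum_le_card_nsmul Finset.univ f _
    fun p _ => le_ciSup (Set.finite_range f).bddAbove p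

variable {I : Inst ν}

lemma ioCost_append (l₁ l₂ : List ν) : ioCost I (l₁ ++ l₂) = ioCost I l₁ + ioCost I l₂ := by
  simp [ioCost]

lemma ioCost_flatMap_finRange (f : Fin P → List ν) :
    ioCost I ((List.finRange P).flatMap f) = ∑ p, ioCost I (f p) := by
  simp [ioCost, List.flatMap, List.sum_flatten, Fin.sum_univ_def, Function.comp_def]

lemma listCost_nonneg (hω : ∀ v, 0 ≤ I.ω v) (hμg : ∀ v, 0 ≤ I.μ v * I.g) (l : List (Op ν)) :
    0 ≤ listCost I l :=
  List.sum_nonneg fun _ hx => by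
    obtain ⟨op, -, rfl⟩ := List.mem_map.1 hx
    cases op <;> simp only [opCost, le_refl, hω, hμg]

theorem ioCost_transfers_le_mul_syncCost (hω : ∀ v, 0 ≤ I.ω v) (hμg : ∀ v, 0 ≤ I.μ v * I.g)
    (hL : 0 ≤ I.L) (sched : Schedule ν I.P) :
    ioCost I (transfers Superstep.save sched) + ioCost I (transfers Superstep.load sched) ≤
      I.P * syncCost I sched := by
  induction sched with
  | nil => simp [transfers, ioCost, syncCost]
  | cons S sched ih =>
    have hsave := sum_le_mul_iSup fun p => ioCost I (S.save p)
    have hload := sum_le_mul_iSup fun p => ioCost I (S.load p)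
    have hcomp : 0 ≤ ⨆ p, listCost I (S.comp p) :=
      Real.iSup_nonneg fun p => listCost_nonneg hω hμg _
    have hP : (0 : ℝ) ≤ I.P := Nat.cast_nonneg _
    simp only [transfers, List.flatMap_cons, ioCost_append, ioCost_flatMap_finRange] at ih ⊢
    simp only [syncCost, List.map_cons, List.sum_cons, ssCost] at ih ⊢
    nlinarith [mul_nonneg hP hcomp, mul_nonneg hP hL]

end Cost

section Zipper

variable {d m : ℕ}

def ChildrenPinned (sched : Schedule (ZNode d m) 2) : Prop :=
  (∀ S ∈ sched, ∀ p : Fin 2, ∀ x : ZNode d m,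
    (∃ h : Fin d, zEdge d m (ZNode.h1 h) x) → Op.compute x ∈ S.comp p → p = 0) ∧
  (∀ S ∈ sched, ∀ p : Fin 2, ∀ x : ZNode d m,
    (∃ h : Fin d, zEdge d m (ZNode.h2 h) x) → Op.compute x ∈ S.comp p → p = 1)

lemma zEdge_h1_or_h2 {w : Fin m → ZNode d m} (hw : w ∈ [ZNode.v, ZNode.u]) (h : Fin d)
    (i : Fin m) : zEdge d m (.h1 h) (w i) ∨ zEdge d m (.h2 h) (w i) := by
  rcases List.mem_pair.1 hw with rfl | rfl
  exacts [Nat.even_or_odd _, (Nat.even_or_odd _).symm]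

lemma zEdge_castSucc_succ {n : ℕ} {w : Fin (n + 1) → ZNode d (n + 1)}
    (hw : w ∈ [ZNode.v, ZNode.u]) (i : Fin n) : zEdge d (n + 1) (w i.castSucc) (w i.succ) := by
  rcases List.mem_pair.1 hw with rfl | rfl <;> rfl

lemma zEdge_opposite_groups {n : ℕ} {w : Fin (n + 1) → ZNode d (n + 1)}
    (hw : w ∈ [ZNode.v, ZNode.u]) (h : Fin d) (i : Fin n) :
    (zEdge d (n + 1) (.h1 h) (w i.castSucc) ∧ zEdge d (n + 1) (.h2 h) (w i.succ)) ∨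
      (zEdge d (n + 1) (.h2 h) (w i.castSucc) ∧ zEdge d (n + 1) (.h1 h) (w i.succ)) := by
  rcases List.mem_pair.1 hw with rfl | rfl <;> rcases Nat.even_or_odd ((i : ℕ) + 1) with hi | hi
  exacts [Or.inl ⟨hi, hi.add_one⟩, Or.inr ⟨hi, hi.add_one⟩, Or.inr ⟨hi, hi.add_one⟩,
    Or.inl ⟨hi, hi.add_one⟩]

lemma isSink_last {n : ℕ} {w : Fin (n + 1) → ZNode d (n + 1)} (hw : w ∈ [ZNode.v, ZNode.u])
    (r g L : ℝ) : isSink (zipper d (n + 1) r g L) (w (Fin.last n)) := by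
  rintro ⟨y, hy⟩
  rcases List.mem_pair.1 hw with rfl | rfl <;> rcases y with _ | _ | j | j
  all_goals first
    | exact hy
    | exact absurd j.isLt (by simp only [zipper, zEdge, Fin.val_last] at hy; omega)

lemma ChildrenPinned.not_computedOn {sched : Schedule (ZNode d m) 2}
    (hpin : ChildrenPinned sched) {x x' : ZNode d m} {h : Fin d}
    (hside : (zEdge d m (.h1 h) x ∧ zEdge d m (.h2 h) x') ∨
      (zEdge d m (.h2 h) x ∧ zEdge d m (.h1 h) x'))
    (p : Fin 2) : ComputedOn sched p x → ¬ ComputedOn sched p x' := by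
  rintro ⟨S, hS, hx⟩ ⟨S', hS', hx'⟩
  rcases hside with ⟨h₁, h₂⟩ | ⟨h₂, h₁⟩
  · exact absurd ((hpin.1 S hS p x ⟨h, h₁⟩ hx).symm.trans (hpin.2 S' hS' p x' ⟨h, h₂⟩ hx'))
      (by decide)
  · exact absurd ((hpin.1 S' hS' p x' ⟨h, h₁⟩ hx').symm.trans (hpin.2 S hS p x ⟨h, h₂⟩ hx))
      (by decide)

theorem ChildrenPinned.saved_and_loaded (hd : 1 ≤ d) {r g L : ℝ}
    {sched : Schedule (ZNode d m) 2} (hpin : ChildrenPinned sched)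
    (hval : Valid (zipper d m r g L) sched) {w : Fin m → ZNode d m}
    (hw : w ∈ [ZNode.v, ZNode.u]) (i : Fin m) (hi : (i : ℕ) + 1 < m) :
    (∃ S ∈ sched, ∃ p, w i ∈ S.save p) ∧ (∃ S ∈ sched, ∃ p, w i ∈ S.load p) := by
  obtain ⟨B₀, hB₀, hsched, hsinks⟩ := hval
  obtain ⟨n, rfl⟩ : ∃ n, m = n + 1 := ⟨m - 1, by omega⟩
  let h : Fin d := ⟨0, hd⟩
  have hB₀w : ∀ j, w j ∉ B₀ := fun j hj =>
    (hB₀ _).1 hj ((zEdge_h1_or_h2 hw h j).elim (⟨_, ·⟩) (⟨_, ·⟩))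
  exact saved_and_loaded_of_path hsched w (zEdge_castSucc_succ hw) hB₀w
    (hsinks _ (isSink_last hw r g L))
    (fun j => hpin.not_computedOn (zEdge_opposite_groups hw h j)) ⟨i, by omega⟩

lemma ioCost_zipper (r g L : ℝ) (l : List (ZNode d m)) :
    ioCost (zipper d m r g L) l = l.length * g := by
  simp [ioCost, zipper]

lemma two_mul_pred_le_length (l : List (ZNode d m))
    (hl : ∀ i : Fin m, (i : ℕ) + 1 < m → ZNode.v i ∈ l ∧ ZNode.u i ∈ l) :
    2 * (m - 1) ≤ l.length := by
  let f : Fin (m - 1) ⊕ Fin (m - 1) → ZNode d m :=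
    Sum.elim (.v ∘ Fin.castLE (m.sub_le 1)) (.u ∘ Fin.castLE (m.sub_le 1))
  have hf : f.Injective := by
    rintro (i | i) (j | j) hij <;> simp [f, Fin.ext_iff] at hij ⊢ <;> omega
  have hmaps : ∀ a ∈ (Finset.univ : Finset _), f a ∈ l.toFinset := by
    have hi : ∀ i : Fin (m - 1), (Fin.castLE (m.sub_le 1) i : ℕ) + 1 < m := fun i => by
      have := i.isLt
      simp only [Fin.val_castLE]
      omega
    rintro (i | i) - <;> rw [List.mem_toFinset]
    exacts [(hl _ (hi i)).1, (hl _ (hi i)).2]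
  calc 2 * (m - 1) = (Finset.univ : Finset (Fin (m - 1) ⊕ Fin (m - 1))).card := by simp; ring
    _ ≤ l.toFinset.card := Finset.card_le_card_of_injOn f hmaps hf.injOn
    _ ≤ l.length := l.toFinset_card_le

end Zipper

theorem statement_3_general (d m : ℕ) (hd : 1 ≤ d) (r g L : ℝ)
    (hg : 0 ≤ g) (hL : 0 ≤ L)
    (sched : Schedule (ZNode d m) 2)
    (hval : Valid (zipper d m r g L) sched)
    (hproc1 : ∀ S ∈ sched, ∀ p : Fin 2, ∀ x : ZNode d m,
      (∃ h : Fin d, zEdge d m (ZNode.h1 h) x) → Op.compute x ∈ S.comp p → p = 0)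
    (hproc2 : ∀ S ∈ sched, ∀ p : Fin 2, ∀ x : ZNode d m,
      (∃ h : Fin d, zEdge d m (ZNode.h2 h) x) → Op.compute x ∈ S.comp p → p = 1) :
    (∀ i : Fin m, (i : ℕ) + 1 < m →
      (∃ S ∈ sched, ∃ p : Fin 2, ZNode.v i ∈ S.save p) ∧
      (∃ S ∈ sched, ∃ p : Fin 2, ZNode.v i ∈ S.load p) ∧
      (∃ S ∈ sched, ∃ p : Fin 2, ZNode.u i ∈ S.save p) ∧
      (∃ S ∈ sched, ∃ p : Fin 2, ZNode.u i ∈ S.load p)) ∧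
    ((2 * (m - 1) : ℕ) : ℝ) * g ≤ syncCost (zipper d m r g L) sched := by
  have hpin : ChildrenPinned sched := ⟨hproc1, hproc2⟩
  have hv := hpin.saved_and_loaded hd hval (w := ZNode.v) (by simp)
  have hu := hpin.saved_and_loaded hd hval (w := ZNode.u) (by simp)
  refine ⟨fun i hi => ⟨(hv i hi).1, (hv i hi).2, (hu i hi).1, (hu i hi).2⟩, ?_⟩
  have hsaves := two_mul_pred_le_length (transfers Superstep.save sched) fun i hi =>
    ⟨mem_transfers.2 (hv i hi).1, mem_transfers.2 (hu i hi).1⟩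
  have hloads := two_mul_pred_le_length (transfers Superstep.load sched) fun i hi =>
    ⟨mem_transfers.2 (hv i hi).2, mem_transfers.2 (hu i hi).2⟩
  have hcost : ((transfers Superstep.save sched).length * g +
      (transfers Superstep.load sched).length * g : ℝ) ≤
      ((2 : ℕ) : ℝ) * syncCost (zipper d m r g L) sched := by
    rw [← ioCost_zipper r g L, ← ioCost_zipper r g L]
    exact ioCost_transfers_le_mul_syncCost (I := zipper d m r g L) (fun _ => zero_le_one)
      (fun _ => by simpa [zipper] using hg) hL sched
  rw [Nat.cast_ofNat] at hcost
  have hsaves' : ((2 * (m - 1) : ℕ) : ℝ) ≤ _ := Nat.cast_le.2 hsaves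
  have hloads' : ((2 * (m - 1) : ℕ) : ℝ) ≤ _ := Nat.cast_le.2 hloads
  linarith [mul_le_mul_of_nonneg_right hsaves' hg, mul_le_mul_of_nonneg_right hloads' hg]

/-- For `d ≥ 1`, `m ≥ 2`, `g, L ≥ 0`, `r ≥ d+2`, on the zipper DAG
`Z(d,m)` with `P = 2`: in every valid schedule computing every child of `H₁` on
processor 1 and every child of `H₂` on processor 2, each of the `2(m−1)` nodes
`v_i, u_i` (`i ∈ [m−1]`) is saved at least once and loaded at least once; hence the
synchronous cost is at least `2(m−1)·g`. -/
theorem statement_3 (d m : ℕ) (hd : 1 ≤ d) (hm : 2 ≤ m) (r g L : ℝ)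
    (hr : (d : ℝ) + 2 ≤ r) (hg : 0 ≤ g) (hL : 0 ≤ L)
    (sched : Schedule (ZNode d m) 2)
    (hval : Valid (zipper d m r g L) sched)
    (hproc1 : ∀ S ∈ sched, ∀ p : Fin 2, ∀ x : ZNode d m,
      (∃ h : Fin d, zEdge d m (ZNode.h1 h) x) → Op.compute x ∈ S.comp p → p = 0)
    (hproc2 : ∀ S ∈ sched, ∀ p : Fin 2, ∀ x : ZNode d m,
      (∃ h : Fin d, zEdge d m (ZNode.h2 h) x) → Op.compute x ∈ S.comp p → p = 1) :
    (∀ i : Fin m, (i : ℕ) + 1 < m →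
      (∃ S ∈ sched, ∃ p : Fin 2, ZNode.v i ∈ S.save p) ∧
      (∃ S ∈ sched, ∃ p : Fin 2, ZNode.v i ∈ S.load p) ∧
      (∃ S ∈ sched, ∃ p : Fin 2, ZNode.u i ∈ S.save p) ∧
      (∃ S ∈ sched, ∃ p : Fin 2, ZNode.u i ∈ S.load p)) ∧
    ((2 * (m - 1) : ℕ) : ℝ) * g ≤ syncCost (zipper d m r g L) sched :=
  statement_3_general d m hd r g L hg hL sched hval hproc1 hproc2

end MBSP
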